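/- For every τ in the upper half-plane with Im τ ≥ √3/2, one has |(E₄(τ)³ − 1)/q| < 2110, where q = e^{2πiτ}. -/

import Mathlib

open Complex

noncomputable section

/-- `sigma' k n = ∑_{d ∣ n} d^k`, the sum of the k-th powers of the positive divisors of n. -/
def sigma' (k n : ℕ) : ℕ := ∑ d ∈ n.divisors, d ^ k

/-- `qpar τ = e^{2πiτ}`. -/
def qpar (τ : ℂ) : ℂ := Complex.exp (2 * Real.pi * Complex.I * τ)

/-- The quasimodular Eisenstein series `E₂(τ) = 1 - 24 ∑_{n≥1} σ₁(n) qⁿ`. -/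
def E2 (τ : ℂ) : ℂ := 1 - 24 * ∑' n : ℕ, (sigma' 1 (n + 1) : ℂ) * qpar τ ^ (n + 1)

/-- The Eisenstein series `E₄(τ) = 1 + 240 ∑_{n≥1} σ₃(n) qⁿ`. -/
def E4 (τ : ℂ) : ℂ := 1 + 240 * ∑' n : ℕ, (sigma' 3 (n + 1) : ℂ) * qpar τ ^ (n + 1)

/-- The Eisenstein series `E₆(τ) = 1 - 504 ∑_{n≥1} σ₅(n) qⁿ`. -/
def E6 (τ : ℂ) : ℂ := 1 - 504 * ∑' n : ℕ, (sigma' 5 (n + 1) : ℂ) * qpar τ ^ (n + 1)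

/-- The modular discriminant `Δ = (E₄³ - E₆²)/1728`. -/
def Δ' (τ : ℂ) : ℂ := (E4 τ ^ 3 - E6 τ ^ 2) / 1728

/-- The modular j-invariant `j = E₄³/Δ`. -/
def jinv (τ : ℂ) : ℂ := E4 τ ^ 3 / Δ' τ

/-- `χ = E₂E₄E₆/Δ`. -/
def χ' (τ : ℂ) : ℂ := E2 τ * E4 τ * E6 τ / Δ' τ

/-- `ξ = E₄E₆/Δ`. -/
def ξ' (τ : ℂ) : ℂ := E4 τ * E6 τ / Δ' τ

/-- The almost holomorphic modular function `χ*(τ) = χ(τ) - (3/(π Im τ)) ξ(τ)`. -/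
def χstar (τ : ℂ) : ℂ := χ' τ - (3 / (Real.pi * τ.im) : ℝ) * ξ' τ

/-- `τ` lies in the upper half-plane and satisfies `aτ² + bτ + c = 0` where
`a > 0` and `gcd(a,b,c) = 1`. -/
def QuadPoint (τ : ℂ) (a b c : ℤ) : Prop :=
  0 < τ.im ∧ 0 < a ∧ Int.gcd (Int.gcd a b) c = 1 ∧
    (a : ℂ) * τ ^ 2 + (b : ℂ) * τ + (c : ℂ) = 0

/-- `τ` is a quadratic point of the upper half-plane. -/
def IsQuadratic (τ : ℂ) : Prop := ∃ a b c : ℤ, QuadPoint τ a b c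

/-- `τ` is a quadratic point of discriminant `D = b² - 4ac`. -/
def HasDisc (τ : ℂ) (D : ℤ) : Prop :=
  ∃ a b c : ℤ, QuadPoint τ a b c ∧ D = b ^ 2 - 4 * a * c

/-- Membership in the closed standard fundamental domain
`F = {z ∈ ℍ : |z| ≥ 1, -1/2 ≤ Re z ≤ 1/2}`. -/
def inF (τ : ℂ) : Prop :=
  0 < τ.im ∧ 1 ≤ ‖τ‖ ∧ -(1 / 2) ≤ τ.re ∧ τ.re ≤ 1 / 2

/-- `τ` and `τ'` lie in the same `SL₂(ℤ)`-orbit under Möbius transformations. -/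
def MoebiusEquiv (τ τ' : ℂ) : Prop :=
  ∃ γ : Matrix.SpecialLinearGroup (Fin 2) ℤ,
    τ' = ((γ.1 0 0 : ℂ) * τ + (γ.1 0 1 : ℂ)) / ((γ.1 1 0 : ℂ) * τ + (γ.1 1 1 : ℂ))

/-! Write `E₄ = 1 + 240 S` with `S = ∑ σ₃(n+1) q^(n+1)`. Since `σ₃(n+1) ≤ 9ⁿ` (with equality for
`n ≤ 1`, and from `σ₃(m) ≤ m⁴` beyond), `|S| ≤ |q| / (1 - 9|q|)`; and `Im τ ≥ √3/2` gives
`|q| ≤ e^(-π√3) < 1/225`, so `|E₄ - 1| ≤ 250 |q|`. Expanding the cube,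
`|E₄³ - 1| ≤ (1 + 250|q|)³ - 1 < 2110 |q|`. -/

theorem sigma'_le_pow_succ (k n : ℕ) : sigma' k n ≤ n ^ (k + 1) :=
  calc ∑ d ∈ n.divisors, d ^ k ≤ ∑ _d ∈ n.divisors, n ^ k :=
        Finset.sum_le_sum fun _ hd => Nat.pow_le_pow_left (Nat.divisor_le hd) k
    _ = n.divisors.card * n ^ k := by rw [Finset.sum_const, smul_eq_mul]
    _ ≤ n * n ^ k := Nat.mul_le_mul_right _ (Nat.card_divisors_le_self n)
    _ = n ^ (k + 1) := (pow_succ' n k).symm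

theorem add_three_pow_four_le_nine_pow (n : ℕ) : (n + 3) ^ 4 ≤ 9 ^ (n + 2) := by
  induction n with
  | zero => norm_num
  | succ n ih =>
    have h : (n + 4) ^ 2 ≤ 3 * (n + 3) ^ 2 := by ring_nf; omega
    calc (n + 1 + 3) ^ 4 = ((n + 4) ^ 2) ^ 2 := by ring
      _ ≤ (3 * (n + 3) ^ 2) ^ 2 := Nat.pow_le_pow_left h 2
      _ = 9 * (n + 3) ^ 4 := by ring
      _ ≤ 9 * 9 ^ (n + 2) := by omega
      _ = 9 ^ (n + 1 + 2) := by ring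

theorem sigma'_three_succ_le_nine_pow (n : ℕ) : sigma' 3 (n + 1) ≤ 9 ^ n := by
  match n with
  | 0 => decide
  | 1 => decide
  | n + 2 => exact (sigma'_le_pow_succ 3 (n + 3)).trans (add_three_pow_four_le_nine_pow n)

theorem norm_tsum_mul_pow_succ_le {𝕜 : Type*} [NormedField 𝕜] {a : ℕ → 𝕜} {C : ℝ} {x : 𝕜}
    (ha : ∀ n, ‖a n‖ ≤ C ^ n) (hx : C * ‖x‖ < 1) :
    ‖∑' n, a n * x ^ (n + 1)‖ ≤ ‖x‖ / (1 - C * ‖x‖) := by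
  have hC : 0 ≤ C := by simpa using (norm_nonneg _).trans (ha 1)
  refine tsum_of_norm_bounded
    ((hasSum_geometric_of_lt_one (by positivity) hx).mul_left ‖x‖) fun n => ?_
  calc ‖a n * x ^ (n + 1)‖ = ‖a n‖ * ‖x‖ ^ (n + 1) := by rw [norm_mul, norm_pow]
    _ ≤ C ^ n * ‖x‖ ^ (n + 1) := by gcongr; exact ha n
    _ = ‖x‖ * (C * ‖x‖) ^ n := by ring

theorem norm_one_add_pow_sub_one_le {R : Type*} [NormedRing R] [NormOneClass R] (x : R) (n : ℕ) :
    ‖(1 + x) ^ n - 1‖ ≤ (1 + ‖x‖) ^ n - 1 := by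
  induction n with
  | zero => simp
  | succ n ih =>
    calc ‖(1 + x) ^ (n + 1) - 1‖ = ‖((1 + x) ^ n - 1) * (1 + x) + x‖ := by noncomm_ring
      _ ≤ ‖(1 + x) ^ n - 1‖ * ‖1 + x‖ + ‖x‖ := by
        grw [norm_add_le, norm_mul_le]
      _ ≤ ((1 + ‖x‖) ^ n - 1) * (1 + ‖x‖) + ‖x‖ := by
        have hpow_nonneg := (norm_nonneg _).trans ih
        grw [ih, norm_add_le, norm_one]
      _ = (1 + ‖x‖) ^ (n + 1) - 1 := by ring

theorem norm_qpar (τ : ℂ) : ‖qpar τ‖ = Real.exp (-(2 * Real.pi * τ.im)) := by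
  rw [qpar, Complex.norm_exp]
  congr 1
  simp [Complex.mul_re, Complex.mul_im]

theorem le_exp_two_pi_mul (t : ℝ) (ht : Real.sqrt 3 / 2 ≤ t) :
    225 ≤ Real.exp (2 * Real.pi * t) := by
  have hsqrt : (1.73 : ℝ) ≤ Real.sqrt 3 := Real.le_sqrt_of_sq_le (by norm_num)
  have hx : (5.43 : ℝ) ≤ 2 * Real.pi * t := by nlinarith [Real.pi_gt_d2]
  calc (225 : ℝ) ≤ ∑ i ∈ Finset.range 12, (5.43 : ℝ) ^ i / i.factorial := by
        norm_num [Finset.sum_range_succ, Nat.factorial]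
    _ ≤ Real.exp 5.43 := Real.sum_le_exp_of_nonneg (by norm_num) 12
    _ ≤ _ := Real.exp_le_exp.2 hx

theorem norm_qpar_le (τ : ℂ) (hτ : Real.sqrt 3 / 2 ≤ τ.im) : ‖qpar τ‖ ≤ 1 / 225 := by
  rw [norm_qpar, Real.exp_neg, one_div]
  exact inv_anti₀ (by norm_num) (le_exp_two_pi_mul τ.im hτ)

theorem norm_E4_sub_one_le (τ : ℂ) (hq : 9 * ‖qpar τ‖ < 1) :
    ‖E4 τ - 1‖ ≤ 240 * (‖qpar τ‖ / (1 - 9 * ‖qpar τ‖)) := by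
  rw [E4, add_sub_cancel_left, norm_mul, Complex.norm_ofNat]
  gcongr
  refine norm_tsum_mul_pow_succ_le (fun n => ?_) hq
  rw [Complex.norm_natCast]
  exact_mod_cast sigma'_three_succ_le_nine_pow n

/-- For `Im τ ≥ √3/2`, `|(E₄(τ)³ - 1)/q| < 2110`. -/
theorem E4_cubed_tail_bound (τ : ℂ) (hτ : Real.sqrt 3 / 2 ≤ τ.im) :
    ‖(E4 τ ^ 3 - 1) / qpar τ‖ < 2110 := by
  have hr_pos : 0 < ‖qpar τ‖ := norm_pos_iff.2 (Complex.exp_ne_zero _)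
  have hr := norm_qpar_le τ hτ
  have hE4 : ‖E4 τ - 1‖ ≤ 250 * ‖qpar τ‖ := by
    refine (norm_E4_sub_one_le τ (by linarith)).trans ?_
    rw [← mul_div_assoc, div_le_iff₀ (by linarith)]
    nlinarith
  have hcube : ‖E4 τ ^ 3 - 1‖ ≤ (1 + 250 * ‖qpar τ‖) ^ 3 - 1 :=
    calc ‖E4 τ ^ 3 - 1‖ = ‖(1 + (E4 τ - 1)) ^ 3 - 1‖ := by rw [add_sub_cancel]
      _ ≤ (1 + ‖E4 τ - 1‖) ^ 3 - 1 := norm_one_add_pow_sub_one_le _ 3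
      _ ≤ (1 + 250 * ‖qpar τ‖) ^ 3 - 1 := by gcongr
  rw [norm_div, div_lt_iff₀ hr_pos]
  nlinarith [mul_pos hr_pos hr_pos]
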